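/- arXiv:1911.10388 — 2 statements merged into one kernel-verified Lean document; each statement's English description precedes it below -/
import Mathlib

section
/- Let G be a bipartite graph on [n] with bipartition V(G) = V1 ⊔ V2. Then the ring automorphism Φ of the polynomial ring K[x_1,...,x_n,y_1,...,y_n] defined by Φ(x_i) = x_i, Φ(y_i) = y_i for i ∈ V1, and Φ(x_i) = y_i, Φ(y_i) = -x_i for i ∈ V2, maps the binomial edge ideal J_G = (x_i y_j - x_j y_i : {i,j} ∈ E(G)) onto the Lovász–Saks–Schrijver ideal L_G = (x_i x_j + y_i y_j : {i,j} ∈ E(G)). -/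
open MvPolynomial

noncomputable section

/-- The binomial edge ideal `J_G = (x_i y_j - x_j y_i : {i,j} ∈ E(G))`. -/
def binEdgeIdeal {V : Type*} (K : Type*) [Field K] (G : SimpleGraph V) :
    Ideal (MvPolynomial (V ⊕ V) K) :=
  Ideal.span {f | ∃ i j, G.Adj i j ∧
    f = X (Sum.inl i) * X (Sum.inr j) - X (Sum.inl j) * X (Sum.inr i)}

/-- The Lovász–Saks–Schrijver ideal `L_G = (x_i x_j + y_i y_j : {i,j} ∈ E(G))`. -/
def lssIdeal {V : Type*} (K : Type*) [Field K] (G : SimpleGraph V) :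
    Ideal (MvPolynomial (V ⊕ V) K) :=
  Ideal.span {f | ∃ i j, G.Adj i j ∧
    f = X (Sum.inl i) * X (Sum.inl j) + X (Sum.inr i) * X (Sum.inr j)}

/-- For a bipartite graph `G` with bipartition `V1 ⊔ V2`, the automorphism
`Φ1` (`x_i ↦ x_i, y_i ↦ y_i` for `i ∈ V1`; `x_i ↦ y_i, y_i ↦ -x_i` for `i ∈ V2`)
maps `J_G` onto `L_G`. -/
theorem phi1_maps_binEdgeIdeal_to_lssIdeal
    (n : ℕ) (K : Type*) [Field K] (G : SimpleGraph (Fin n))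
    (V1 V2 : Set (Fin n)) [DecidablePred (· ∈ V1)]
    (hdisj : Disjoint V1 V2) (hcover : V1 ∪ V2 = Set.univ)
    (hbip : ∀ i j, G.Adj i j → (i ∈ V1 ↔ j ∈ V2)) :
    Ideal.map
      (MvPolynomial.aeval (fun v : Fin n ⊕ Fin n =>
        match v with
        | Sum.inl i => if i ∈ V1 then X (Sum.inl i) else X (Sum.inr i)
        | Sum.inr i => if i ∈ V1 then X (Sum.inr i) else - X (Sum.inl i)) :
        MvPolynomial (Fin n ⊕ Fin n) K →ₐ[K] MvPolynomial (Fin n ⊕ Fin n) K)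
      (binEdgeIdeal K G) = lssIdeal K G := by
  set Φ : MvPolynomial (Fin n ⊕ Fin n) K →ₐ[K] MvPolynomial (Fin n ⊕ Fin n) K :=
    (MvPolynomial.aeval (fun v : Fin n ⊕ Fin n =>
        match v with
        | Sum.inl i => if i ∈ V1 then X (Sum.inl i) else X (Sum.inr i)
        | Sum.inr i => if i ∈ V1 then X (Sum.inr i) else - X (Sum.inl i))) with hΦ
  have hcov : ∀ i : Fin n, i ∉ V1 → i ∈ V2 := by
    intro i hi
    have : i ∈ V1 ∪ V2 := by rw [hcover]; trivial
    exact this.resolve_left hi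
  apply le_antisymm
  · rw [binEdgeIdeal, Ideal.map_span, Ideal.span_le]
    rintro f ⟨g, ⟨i, j, hij, rfl⟩, rfl⟩
    by_cases hi : i ∈ V1
    · have hj2 : j ∈ V2 := (hbip i j hij).mp hi
      have hj : j ∉ V1 := fun hj1 => Set.disjoint_left.mp hdisj hj1 hj2
      have : Φ (X (Sum.inl i) * X (Sum.inr j) - X (Sum.inl j) * X (Sum.inr i))
          = -(X (Sum.inl i) * X (Sum.inl j) + X (Sum.inr i) * X (Sum.inr j)) := by
        simp only [hΦ, map_sub, map_mul, aeval_X, hi, hj, if_pos, if_neg, if_true, if_false]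
        ring
      rw [this]
      exact neg_mem (Ideal.subset_span ⟨i, j, hij, rfl⟩)
    · have hj : j ∈ V1 := by
        by_contra hj
        exact hi ((hbip i j hij).mpr (hcov j hj))
      have : Φ (X (Sum.inl i) * X (Sum.inr j) - X (Sum.inl j) * X (Sum.inr i))
          = X (Sum.inl i) * X (Sum.inl j) + X (Sum.inr i) * X (Sum.inr j) := by
        simp only [hΦ, map_sub, map_mul, aeval_X, hi, hj, if_pos, if_neg, if_true, if_false]
        ring
      rw [this]
      exact Ideal.subset_span ⟨i, j, hij, rfl⟩
  · rw [lssIdeal, Ideal.span_le]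
    rintro f ⟨i, j, hij, rfl⟩
    by_cases hi : i ∈ V1
    · have hj2 : j ∈ V2 := (hbip i j hij).mp hi
      have hj : j ∉ V1 := fun hj1 => Set.disjoint_left.mp hdisj hj1 hj2
      have : X (Sum.inl i) * X (Sum.inl j) + X (Sum.inr i) * X (Sum.inr j)
          = Φ (X (Sum.inl j) * X (Sum.inr i) - X (Sum.inl i) * X (Sum.inr j)) := by
        simp only [hΦ, map_sub, map_mul, aeval_X, hi, hj, if_pos, if_neg, if_true, if_false]
        ring
      rw [this]
      exact Ideal.mem_map_of_mem Φ (Ideal.subset_span ⟨j, i, hij.symm, rfl⟩)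
    · have hj : j ∈ V1 := by
        by_contra hj
        exact hi ((hbip i j hij).mpr (hcov j hj))
      have : X (Sum.inl i) * X (Sum.inl j) + X (Sum.inr i) * X (Sum.inr j)
          = Φ (X (Sum.inl i) * X (Sum.inr j) - X (Sum.inl j) * X (Sum.inr i)) := by
        simp only [hΦ, map_sub, map_mul, aeval_X, hi, hj, if_pos, if_neg, if_true, if_false]
        ring
      rw [this]
      exact Ideal.mem_map_of_mem Φ (Ideal.subset_span ⟨i, j, hij, rfl⟩)
end
end

section
/- Let K_4 be the complete graph on vertices {1,2,3,4}. Then in S = K[x_1,...,x_4,y_1,...,y_4] the Plücker-type relation f_{1,2} f_{3,4} - f_{1,3} f_{2,4} + f_{1,4} f_{2,3} = 0 holds, where f_{i,j} = x_i y_j - x_j y_i. Consequently, if K_4 is an induced subgraph of a graph G, then the binomial edge ideal J_G is not of linear type (its Rees algebra's defining ideal contains a quadratic relation in the T-variables not coming from the symmetric algebra). -/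
/-!
Fix `a, b, c, d` pairwise adjacent and let `L = [x_a y_b] + [x_c y_d]` (sum of two coefficients).
Consider the character `Ψ` of `S[T]` sending `s ∈ S` to its constant term and `T_e` to `L(f_e)`.
Since the `f_e` are quadrics, `L(s f_e) = s(0) L(f_e)`, so `Ψ` of a linear form `∑ s_e T_e`
in the Rees ideal is `L(∑ s_e f_e) = 0`. But the Plücker quadric
`T_{ab} T_{cd} - T_{ac} T_{bd} + T_{ad} T_{bc}` lies in the Rees ideal by the Plücker relation,
and `Ψ` sends it to `1`.
-/

open MvPolynomial

noncomputable section

variable {n : ℕ}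

/-- `f_{a,b} = x_a y_b - x_b y_a`. -/
def fpoly (K : Type*) [Field K] (a b : Fin n) : MvPolynomial (Fin n ⊕ Fin n) K :=
  X (Sum.inl a) * X (Sum.inr b) - X (Sum.inl b) * X (Sum.inr a)

/-- The presentation map of the Rees algebra of the binomial edge ideal `J_G`:
`T_{(i,j)} ↦ f_{i,j}·t` for each (ordered) edge of `G`. -/
def reesMap (K : Type*) [Field K] (G : SimpleGraph (Fin n)) :
    MvPolynomial {e : Fin n × Fin n // G.Adj e.1 e.2} (MvPolynomial (Fin n ⊕ Fin n) K)
      →ₐ[MvPolynomial (Fin n ⊕ Fin n) K] Polynomial (MvPolynomial (Fin n ⊕ Fin n) K) :=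
  MvPolynomial.aeval (fun e => Polynomial.C (fpoly K e.1.1 e.1.2) * Polynomial.X)

namespace MvPolynomial

variable {σ R : Type*} [CommSemiring R]

theorem IsHomogeneous.coeff_mul_of_degree_eq {f : MvPolynomial σ R} {d : ℕ}
    (hf : f.IsHomogeneous d) {μ : σ →₀ ℕ} (hμ : μ.degree = d) (s : MvPolynomial σ R) :
    coeff μ (s * f) = constantCoeff s * coeff μ f := by
  classical
  rw [coeff_mul, Finset.sum_eq_single (0, μ)]
  · simp [constantCoeff_eq]
  · rintro ⟨u, v⟩ huv hne
    rw [Finset.HasAntidiagonal.mem_antidiagonal] at huv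
    dsimp only at huv ⊢
    by_cases hv : coeff v f = 0
    · rw [hv, mul_zero]
    have hdeg : v.degree = d := by
      rw [Finsupp.degree_eq_weight_one]; exact hf hv
    have hu : u = 0 := by
      rw [← Finsupp.degree_eq_zero_iff]
      have := congrArg Finsupp.degree huv
      rw [map_add] at this
      omega
    subst hu
    simp_all
  · simp

variable {ι S K : Type*} [CommRing S] [CommRing K]

theorem eval₂_eq_of_isHomogeneous_one (φ : S →+* K) (L : S →+ K) (g : ι → S)
    (hL : ∀ i t, L (t * g i) = φ t * L (g i)) {q : MvPolynomial ι S} (hq : q.IsHomogeneous 1) :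
    eval₂ φ (fun i => L (g i)) q = L (eval g q) := by
  have hspan : q ∈ Submodule.span S (Set.range X) := by
    rw [← homogeneousSubmodule_one_eq_span_X]; exact hq
  -- `L` is `φ`-semilinear only on the ideal spanned by the `g i`, so carry that along.
  suffices ∀ t, φ t * eval₂ φ (fun i => L (g i)) q = L (t * eval g q) by
    simpa using this 1
  clear hq
  induction hspan using Submodule.span_induction with
  | mem _ hx =>
    obtain ⟨i, rfl⟩ := hx
    intro t; simp [hL]
  | zero => simp
  | add q₁ q₂ _ _ h₁ h₂ =>
    intro t; simp [mul_add, h₁ t, h₂ t]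
  | smul s q _ h =>
    intro t
    rw [smul_eq_C_mul, eval₂_mul, eval₂_C, eval_mul, eval_C, ← mul_assoc, ← map_mul,
      h, mul_assoc]

end MvPolynomial

section BinomialEdgeIdeal

variable (K : Type*) [Field K]

theorem fpoly_pluecker (a b c d : Fin n) :
    fpoly K a b * fpoly K c d - fpoly K a c * fpoly K b d + fpoly K a d * fpoly K b c = 0 := by
  simp only [fpoly]
  ring

theorem isHomogeneous_fpoly (a b : Fin n) : (fpoly K a b).IsHomogeneous 2 :=
  ((isHomogeneous_X K _).mul (isHomogeneous_X K _)).sub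
    ((isHomogeneous_X K _).mul (isHomogeneous_X K _))

def xyExponent (a b : Fin n) : Fin n ⊕ Fin n →₀ ℕ :=
  Finsupp.single (Sum.inl a) 1 + Finsupp.single (Sum.inr b) 1

theorem degree_xyExponent (a b : Fin n) : (xyExponent a b).degree = 2 := by
  simp [xyExponent]

theorem xyExponent_inj {a b i j : Fin n} : xyExponent i j = xyExponent a b ↔ i = a ∧ j = b := by
  simp [xyExponent, Finsupp.single_add_single_eq_single_add_single]

theorem fpoly_eq_monomial_sub_monomial (a b : Fin n) :
    fpoly K a b = monomial (xyExponent a b) 1 - monomial (xyExponent b a) 1 := by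
  simp [fpoly, X, monomial_mul, xyExponent]

theorem coeff_xyExponent_fpoly (a b i j : Fin n) :
    coeff (xyExponent a b) (fpoly K i j) =
      (if i = a ∧ j = b then 1 else 0) - (if j = a ∧ i = b then 1 else 0) := by
  simp only [fpoly_eq_monomial_sub_monomial, coeff_sub, coeff_monomial, xyExponent_inj]

end BinomialEdgeIdeal

section ReesAlgebra

variable (K : Type*) [Field K] {G : SimpleGraph (Fin n)}

theorem eval_one_reesMap
    (q : MvPolynomial {e : Fin n × Fin n // G.Adj e.1 e.2} (MvPolynomial (Fin n ⊕ Fin n) K)) :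
    (reesMap K G q).eval 1 = eval (fun e => fpoly K e.1.1 e.1.2) q := by
  rw [← Polynomial.coe_aeval_eq_eval, reesMap, comp_aeval_apply, ← coe_aeval_eq_eval]
  simp

theorem span_linearForms_le_ker_eval₂Hom (L : MvPolynomial (Fin n ⊕ Fin n) K →+ K)
    (hL : ∀ t a b, L (t * fpoly K a b) = constantCoeff t * L (fpoly K a b)) :
    Ideal.span {p | p ∈ RingHom.ker (reesMap K G) ∧ p.IsHomogeneous 1} ≤
      RingHom.ker (eval₂Hom constantCoeff fun e => L (fpoly K e.1.1 e.1.2)) := by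
  refine Ideal.span_le.mpr fun q ⟨hker, hq⟩ => ?_
  rw [SetLike.mem_coe, RingHom.mem_ker, coe_eval₂Hom,
    eval₂_eq_of_isHomogeneous_one (ι := {e : Fin n × Fin n // G.Adj e.1 e.2}) constantCoeff L _
      (fun e t => hL t e.1.1 e.1.2) hq,
    ← eval_one_reesMap, RingHom.mem_ker.mp hker, Polynomial.eval_zero, map_zero]

variable {K}

def plueckerQuadric {a b c d : Fin n} (hab : G.Adj a b) (hac : G.Adj a c) (had : G.Adj a d)
    (hbc : G.Adj b c) (hbd : G.Adj b d) (hcd : G.Adj c d) :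
    MvPolynomial {e : Fin n × Fin n // G.Adj e.1 e.2} (MvPolynomial (Fin n ⊕ Fin n) K) :=
  X ⟨(a, b), hab⟩ * X ⟨(c, d), hcd⟩ - X ⟨(a, c), hac⟩ * X ⟨(b, d), hbd⟩ +
    X ⟨(a, d), had⟩ * X ⟨(b, c), hbc⟩

variable {a b c d : Fin n} (hab : G.Adj a b) (hac : G.Adj a c) (had : G.Adj a d)
  (hbc : G.Adj b c) (hbd : G.Adj b d) (hcd : G.Adj c d)

theorem reesMap_plueckerQuadric :
    reesMap K G (plueckerQuadric hab hac had hbc hbd hcd) = 0 := by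
  have h := congrArg (fun p => Polynomial.C p * Polynomial.X ^ 2) (fpoly_pluecker K a b c d)
  simp only [map_add, map_sub, map_mul, map_zero, zero_mul] at h
  simp only [plueckerQuadric, reesMap, map_add, map_sub, map_mul, aeval_X]
  linear_combination h

variable (K a b c d) in
def xyCoeffSum : MvPolynomial (Fin n ⊕ Fin n) K →+ K :=
  coeffAddMonoidHom (xyExponent a b) + coeffAddMonoidHom (xyExponent c d)

theorem xyCoeffSum_mul_fpoly (t : MvPolynomial (Fin n ⊕ Fin n) K) (i j : Fin n) :
    xyCoeffSum K a b c d (t * fpoly K i j) =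
      constantCoeff t * xyCoeffSum K a b c d (fpoly K i j) := by
  simp only [xyCoeffSum, AddMonoidHom.add_apply, coeffAddMonoidHom_apply, mul_add,
    (isHomogeneous_fpoly K i j).coeff_mul_of_degree_eq (degree_xyExponent _ _)]

theorem eval₂Hom_xyCoeffSum_plueckerQuadric :
    eval₂Hom constantCoeff (fun e => xyCoeffSum K a b c d (fpoly K e.1.1 e.1.2))
      (plueckerQuadric hab hac had hbc hbd hcd) = 1 := by
  simp [plueckerQuadric, xyCoeffSum, coeff_xyExponent_fpoly, hab.ne, hac.ne, had.ne, hbc.ne,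
    hbd.ne, hcd.ne, hab.ne', hac.ne', had.ne', hbc.ne', hbd.ne', hcd.ne']

end ReesAlgebra

/-- The Plücker relation `f_{1,2} f_{3,4} - f_{1,3} f_{2,4} + f_{1,4} f_{2,3} = 0` holds;
consequently, if `K_4` is an induced subgraph of `G` (vertices `a,b,c,d` pairwise
adjacent), then `J_G` is not of linear type: the defining ideal of its Rees algebra is
not generated by forms that are linear in the `T`-variables. -/
theorem k4_pluecker_and_not_linear_type
    (K : Type*) [Field K] :
    (fpoly (n := 4) K 0 1 * fpoly K 2 3 - fpoly K 0 2 * fpoly K 1 3 +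
      fpoly K 0 3 * fpoly K 1 2 = 0) ∧
    ∀ (G : SimpleGraph (Fin n)) (a b c d : Fin n),
      G.Adj a b → G.Adj a c → G.Adj a d → G.Adj b c → G.Adj b d → G.Adj c d →
      Ideal.span {p | p ∈ RingHom.ker (reesMap K G) ∧ p.IsHomogeneous 1} ≠
        RingHom.ker (reesMap K G) := by
  refine ⟨fpoly_pluecker K 0 1 2 3, fun G a b c d hab hac had hbc hbd hcd hlinear => ?_⟩
  have hP : plueckerQuadric hab hac had hbc hbd hcd ∈ RingHom.ker (reesMap K G) :=
    reesMap_plueckerQuadric hab hac had hbc hbd hcd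
  rw [← hlinear] at hP
  have hΨ := span_linearForms_le_ker_eval₂Hom K (xyCoeffSum K a b c d) xyCoeffSum_mul_fpoly hP
  rw [RingHom.mem_ker, eval₂Hom_xyCoeffSum_plueckerQuadric] at hΨ
  exact one_ne_zero hΨ
end
end
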